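/- arXiv:1609.08725 — 2 statements merged into one kernel-verified Lean document; each statement's English description precedes it below -/
import Mathlib

section
/- Let A be a symmetric positive definite p×p matrix with smallest eigenvalue τ_A > 0, B a p×p matrix, and Y ∈ ℝᵖ. Then for k = 1, |tr((A + YYᵀ)⁻¹ B) - tr(A⁻¹ B)| ≤ ‖B‖ / τ_A, where ‖B‖ is the operator norm. -/
/-!
With `w = A⁻¹ Y`, the Sherman–Morrison formula gives
`(A + Y Yᵀ)⁻¹ = A⁻¹ - w wᵀ / (1 + Yᵀ w)`, so the two traces differ by `wᵀ B w / (1 + wᵀ A w)`.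
Its numerator is at most `‖B‖ |w|²` and its denominator at least `1 + τ_A |w|² > τ_A |w|²`.
-/

open Matrix

/-- Spectral (ℓ²-operator) norm of a real matrix. -/
noncomputable def opNorm {p : ℕ} (B : Matrix (Fin p) (Fin p) ℝ) : ℝ :=
  ‖Matrix.toEuclideanCLM (𝕜 := ℝ) B‖

namespace Matrix

variable {n K : Type*} [Fintype n] [DecidableEq n] [Field K]

theorem inv_add_vecMulVec {A : Matrix n n K} (hA : IsUnit A.det) (u v : n → K)
    (hs : 1 + v ⬝ᵥ (A⁻¹ *ᵥ u) ≠ 0) :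
    (A + vecMulVec u v)⁻¹ =
      A⁻¹ - (1 + v ⬝ᵥ (A⁻¹ *ᵥ u))⁻¹ • vecMulVec (A⁻¹ *ᵥ u) (v ᵥ* A⁻¹) := by
  set c := (1 + v ⬝ᵥ (A⁻¹ *ᵥ u))⁻¹
  have hc : c + c * (v ⬝ᵥ (A⁻¹ *ᵥ u)) = 1 := by
    rw [← mul_one_add, inv_mul_cancel₀ hs]
  apply inv_eq_right_inv
  rw [mul_sub, add_mul, add_mul, mul_nonsing_inv A hA, mul_smul_comm, mul_smul_comm,
    mul_vecMulVec, mulVec_mulVec, mul_nonsing_inv A hA, one_mulVec, vecMulVec_mul,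
    vecMulVec_mul_vecMulVec, vecMulVec_smul, smul_smul, ← add_smul, hc, one_smul,
    add_sub_cancel_right]

theorem trace_inv_add_vecMulVec_mul_sub {A : Matrix n n K} (hA : IsUnit A.det) (u v : n → K)
    (hs : 1 + v ⬝ᵥ (A⁻¹ *ᵥ u) ≠ 0) (B : Matrix n n K) :
    ((A + vecMulVec u v)⁻¹ * B).trace - (A⁻¹ * B).trace =
      -((1 + v ⬝ᵥ (A⁻¹ *ᵥ u))⁻¹ * ((v ᵥ* A⁻¹) ⬝ᵥ (B *ᵥ (A⁻¹ *ᵥ u)))) := by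
  rw [inv_add_vecMulVec hA u v hs, sub_mul, trace_sub, smul_mul_assoc, trace_smul,
    vecMulVec_mul, trace_vecMulVec, dotProduct_comm (A⁻¹ *ᵥ u), ← dotProduct_mulVec, smul_eq_mul,
    sub_sub_cancel_left]

theorem vecMul_inv_of_isHermitian {A : Matrix n n ℝ} (hA : A.IsHermitian) (v : n → ℝ) :
    v ᵥ* A⁻¹ = A⁻¹ *ᵥ v := by
  rw [← vecMul_transpose, ← conjTranspose_eq_transpose_of_trivial, hA.inv.eq]

end Matrix

theorem abs_dotProduct_mulVec_le_opNorm {p : ℕ} (B : Matrix (Fin p) (Fin p) ℝ) (x : Fin p → ℝ) :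
    |x ⬝ᵥ (B *ᵥ x)| ≤ opNorm B * (x ⬝ᵥ x) := by
  set x' := WithLp.toLp 2 x
  have hB : x ⬝ᵥ (B *ᵥ x) = inner ℝ x' (toEuclideanCLM (𝕜 := ℝ) B x') :=
    (inner_toEuclideanCLM B x' x').symm
  have hx : x ⬝ᵥ x = ‖x'‖ * ‖x'‖ := by
    rw [← real_inner_self_eq_norm_mul_norm, EuclideanSpace.inner_eq_star_dotProduct]
    rfl
  calc |x ⬝ᵥ (B *ᵥ x)|
      ≤ ‖x'‖ * ‖toEuclideanCLM (𝕜 := ℝ) B x'‖ := hB ▸ abs_real_inner_le_norm _ _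
    _ ≤ ‖x'‖ * (opNorm B * ‖x'‖) := by gcongr; exact (toEuclideanCLM (𝕜 := ℝ) B).le_opNorm x'
    _ = opNorm B * (x ⬝ᵥ x) := by rw [hx]; ring

/-- Rank-one perturbation bound for the trace of the resolvent, case k = 1. -/
theorem trace_resolvent_rank_one_perturbation {p : ℕ}
    (A B : Matrix (Fin p) (Fin p) ℝ) (Y : Fin p → ℝ) (τA : ℝ)
    (hA : A.PosDef) (hτ : 0 < τA)
    (hlb : ∀ x : Fin p → ℝ, τA * (x ⬝ᵥ x) ≤ x ⬝ᵥ (A *ᵥ x)) :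
    |((A + vecMulVec Y Y)⁻¹ * B).trace - (A⁻¹ * B).trace| ≤ opNorm B / τA := by
  have hdet : IsUnit A.det := hA.det_pos.ne'.isUnit
  set w := A⁻¹ *ᵥ Y
  have hAw : A *ᵥ w = Y := by rw [mulVec_mulVec, mul_nonsing_inv A hdet, one_mulVec]
  have hτw : τA * (w ⬝ᵥ w) ≤ Y ⬝ᵥ w := by simpa only [hAw, dotProduct_comm w] using hlb w
  have hww : 0 ≤ w ⬝ᵥ w := dotProduct_self_star_nonneg w
  have hs : 0 < 1 + Y ⬝ᵥ w := by nlinarith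
  rw [trace_inv_add_vecMulVec_mul_sub hdet Y Y hs.ne', vecMul_inv_of_isHermitian hA.isHermitian,
    abs_neg, abs_mul, abs_of_pos (inv_pos.2 hs)]
  calc (1 + Y ⬝ᵥ w)⁻¹ * |w ⬝ᵥ (B *ᵥ w)|
      ≤ (1 + Y ⬝ᵥ w)⁻¹ * (opNorm B * (w ⬝ᵥ w)) := by
        gcongr; exact abs_dotProduct_mulVec_le_opNorm B w
    _ ≤ opNorm B / τA := by
        rw [inv_mul_le_iff₀ hs, mul_div_assoc', le_div_iff₀ hτ]
        have hB : 0 ≤ opNorm B := norm_nonneg _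
        nlinarith [mul_le_mul_of_nonneg_left hτw hB]
end

section
/- Let n₁, n₂ ≥ 1, n = n₁ + n₂, and let X̄₁, X̄₂ ∈ ℝᵖ and S̃ a symmetric positive semidefinite p×p matrix with S = (n/(n−2)) S̃ − (n₁/(n−2)) X̄₁X̄₁ᵀ − (n₂/(n−2)) X̄₂X̄₂ᵀ. Fix λ > 0 and set U_{kl} = X̄_kᵀ(S̃+λI)⁻¹X̄_l for k,l ∈ {1,2}, and H = [[n/n₁ − U₁₁, −U₁₂],[−U₁₂, n/n₂ − U₂₂]]. If H is invertible and S + (n/(n−2))λ I is invertible, then (n/(n−2)) (S + (n/(n−2))λ I)⁻¹ = (S̃+λI)⁻¹ + (S̃+λI)⁻¹ [X̄₁ X̄₂] H⁻¹ [X̄₁ X̄₂]ᵀ (S̃+λI)⁻¹. -/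
open Matrix

/-- Woodbury identity relating the centered pooled sample covariance `S` to the
uncentered second-moment matrix `S̃` (equation (eq:S_ts) of the paper). -/
theorem woodbury_centered_uncentered {p : ℕ} (n₁ n₂ : ℕ)
    (hn₁ : 1 ≤ n₁) (hn₂ : 1 ≤ n₂) (hn : 2 < n₁ + n₂)
    (X₁ X₂ : Fin p → ℝ) (St : Matrix (Fin p) (Fin p) ℝ)
    (hSt : St.PosSemidef) (l : ℝ) (hl : 0 < l)
    (n : ℕ) (hdefn : n = n₁ + n₂)
    (S : Matrix (Fin p) (Fin p) ℝ)
    (hS : S = ((n : ℝ) / ((n : ℝ) - 2)) • St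
        - ((n₁ : ℝ) / ((n : ℝ) - 2)) • vecMulVec X₁ X₁
        - ((n₂ : ℝ) / ((n : ℝ) - 2)) • vecMulVec X₂ X₂)
    (U : Fin 2 → Fin 2 → ℝ)
    (hU : ∀ k m : Fin 2,
      U k m = (![X₁, X₂] k) ⬝ᵥ ((St + l • 1)⁻¹ *ᵥ (![X₁, X₂] m)))
    (Hm : Matrix (Fin 2) (Fin 2) ℝ)
    (hHm : Hm = !![(n : ℝ) / (n₁ : ℝ) - U 0 0, -U 0 1;
                   -U 0 1, (n : ℝ) / (n₂ : ℝ) - U 1 1])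
    (hHinv : IsUnit Hm.det)
    (hSinv : IsUnit (S + (((n : ℝ) / ((n : ℝ) - 2)) * l) • 1).det) :
    ((n : ℝ) / ((n : ℝ) - 2)) • (S + (((n : ℝ) / ((n : ℝ) - 2)) * l) • 1)⁻¹ =
      (St + l • 1)⁻¹ +
        (St + l • 1)⁻¹ * (Matrix.of fun i (j : Fin 2) => ![X₁, X₂] j i) * Hm⁻¹
          * (Matrix.of fun i (j : Fin 2) => ![X₁, X₂] j i)ᵀ * (St + l • 1)⁻¹ := by
  have hn2 : (2:ℝ) < (n:ℝ) := by
    rw [hdefn]; exact_mod_cast hn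
  have hne : (n:ℝ) - 2 ≠ 0 := by linarith
  have hn1ne : (n₁:ℝ) ≠ 0 := Nat.cast_ne_zero.mpr (by omega)
  have hn2ne : (n₂:ℝ) ≠ 0 := Nat.cast_ne_zero.mpr (by omega)
  set c : ℝ := (n:ℝ)/((n:ℝ)-2) with hc
  set A : Matrix (Fin p) (Fin p) ℝ := St + l • 1 with hAdef
  set V : Matrix (Fin p) (Fin 2) ℝ :=
    Matrix.of fun i (j : Fin 2) => ![X₁, X₂] j i with hVdef
  -- A is positive definite, hence invertible
  have hApd : A.PosDef := by
    refine Matrix.PosDef.posSemidef_add hSt ?_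
    rw [Matrix.smul_one_eq_diagonal]
    exact Matrix.PosDef.diagonal fun _ => hl
  have hAunit : IsUnit A.det := isUnit_iff_ne_zero.mpr hApd.det_pos.ne'
  have hAA : A⁻¹ * A = 1 := Matrix.nonsing_inv_mul A hAunit
  -- symmetry of A⁻¹
  have hAsymm : (A⁻¹)ᵀ = A⁻¹ := by
    have h1 : Aᵀ = A := by
      have := hApd.isHermitian
      simpa [Matrix.IsHermitian] using this
    rw [Matrix.transpose_nonsing_inv, h1]
  -- symmetry of U
  have hU10 : U 1 0 = U 0 1 := by
    rw [hU, hU]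
    simp only [Matrix.cons_val_zero, Matrix.cons_val_one, Matrix.head_cons]
    rw [Matrix.dotProduct_mulVec]
    rw [show X₂ ᵥ* A⁻¹ = X₂ ᵥ* (A⁻¹)ᵀ by rw [hAsymm]]
    rw [Matrix.vecMul_transpose, dotProduct_comm]
  -- the 2×2 matrices
  set uM : Matrix (Fin 2) (Fin 2) ℝ := Matrix.of U with huM
  set Dm : Matrix (Fin 2) (Fin 2) ℝ :=
    !![(n₁:ℝ)/((n:ℝ)-2), 0; 0, (n₂:ℝ)/((n:ℝ)-2)] with hDm
  -- Vᵀ A⁻¹ V = uM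
  have hVAV : Vᵀ * A⁻¹ * V = uM := by
    ext k m
    rw [huM, Matrix.of_apply, hU k m]
    simp only [Matrix.mul_apply, Matrix.transpose_apply, hVdef, Matrix.of_apply,
      dotProduct, Matrix.mulVec, Finset.sum_mul, Finset.mul_sum]
    rw [Finset.sum_comm]
    exact Finset.sum_congr rfl fun i _ => Finset.sum_congr rfl fun j _ => by ring
  -- V Dm Vᵀ equals the rank-two update
  have hVDV : V * Dm * Vᵀ
      = ((n₁:ℝ)/((n:ℝ)-2)) • vecMulVec X₁ X₁ + ((n₂:ℝ)/((n:ℝ)-2)) • vecMulVec X₂ X₂ := by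
    ext i j
    simp [Matrix.mul_apply, Fin.sum_univ_two, hVdef, hDm, Matrix.vecMulVec_apply]
    ring
  -- B = c • A - V Dm Vᵀ
  set B : Matrix (Fin p) (Fin p) ℝ := S + (c * l) • 1 with hBdef
  have hB : B = c • A - V * Dm * Vᵀ := by
    rw [hBdef, hS, hVDV, hAdef, smul_add, smul_smul]
    abel
  -- key 2×2 identity : (Hm + uM) * Dm = c • 1
  have hHU : (Hm + uM) * Dm = c • 1 := by
    rw [hHm, hDm, hc]
    ext i j
    fin_cases i <;> fin_cases j <;>
      simp [Matrix.mul_apply, Fin.sum_univ_two, huM, Matrix.one_apply,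
        Matrix.vecHead, Matrix.vecTail, hU10] <;>
      field_simp
  have hHmul : Hm⁻¹ * Hm = 1 := Matrix.nonsing_inv_mul _ hHinv
  have hkey : c • Hm⁻¹ = Dm + Hm⁻¹ * (uM * Dm) := by
    have h1 : Hm⁻¹ * ((Hm + uM) * Dm) = Hm⁻¹ * (c • 1) := by rw [hHU]
    rw [Matrix.mul_smul, mul_one] at h1
    rw [← h1, add_mul, mul_add, ← Matrix.mul_assoc, ← Matrix.mul_assoc, hHmul, one_mul,
      Matrix.mul_assoc]
  -- the candidate inverse
  set R : Matrix (Fin p) (Fin p) ℝ := A⁻¹ + A⁻¹ * V * Hm⁻¹ * Vᵀ * A⁻¹ with hRdef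
  have hRB : R * B = c • 1 := by
    have hRA : R * A = 1 + A⁻¹ * (V * (Hm⁻¹ * Vᵀ)) := by
      rw [hRdef, add_mul, hAA, Matrix.mul_assoc _ A⁻¹ A, hAA, mul_one,
        Matrix.mul_assoc, Matrix.mul_assoc]
    have hRV : R * (V * (Dm * Vᵀ))
        = A⁻¹ * (V * (Dm * Vᵀ)) + A⁻¹ * (V * (Hm⁻¹ * (uM * (Dm * Vᵀ)))) := by
      rw [hRdef, add_mul]
      congr 1
      have : A⁻¹ * V * Hm⁻¹ * Vᵀ * A⁻¹ * (V * (Dm * Vᵀ))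
          = A⁻¹ * V * Hm⁻¹ * (Vᵀ * A⁻¹ * V) * (Dm * Vᵀ) := by
        simp only [Matrix.mul_assoc]
      rw [this, hVAV]
      simp only [Matrix.mul_assoc]
    have hBr : B = c • A - V * (Dm * Vᵀ) := by rw [hB, Matrix.mul_assoc]
    rw [hBr, mul_sub, Matrix.mul_smul, hRA, hRV, smul_add]
    have hsplit : c • (A⁻¹ * (V * (Hm⁻¹ * Vᵀ)))
        = A⁻¹ * (V * (Dm * Vᵀ)) + A⁻¹ * (V * (Hm⁻¹ * (uM * (Dm * Vᵀ)))) := by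
      have h2 : (c • Hm⁻¹) * Vᵀ = (Dm + Hm⁻¹ * (uM * Dm)) * Vᵀ := by rw [hkey]
      rw [Matrix.smul_mul, Matrix.add_mul, Matrix.mul_assoc, Matrix.mul_assoc] at h2
      calc c • (A⁻¹ * (V * (Hm⁻¹ * Vᵀ)))
          = A⁻¹ * (V * (c • (Hm⁻¹ * Vᵀ))) := by
            rw [Matrix.mul_smul, Matrix.mul_smul]
        _ = A⁻¹ * (V * (Dm * Vᵀ + Hm⁻¹ * (uM * (Dm * Vᵀ)))) := by rw [h2]
        _ = _ := by rw [Matrix.mul_add, Matrix.mul_add]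
    rw [hsplit]
    abel
  -- conclude
  have hBB : B * B⁻¹ = 1 := Matrix.mul_nonsing_inv B hSinv
  have hfin : R = c • B⁻¹ := by
    calc R = R * (B * B⁻¹) := by rw [hBB, mul_one]
      _ = R * B * B⁻¹ := by rw [Matrix.mul_assoc]
      _ = (c • 1) * B⁻¹ := by rw [hRB]
      _ = c • B⁻¹ := by rw [Matrix.smul_mul, one_mul]
  rw [← hfin, hRdef]
end
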